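/- Let {b^x}_{x∈X} be the basis of A dual to {e_x}_{x∈X} with respect to the metric g, i.e. g(e_x, b^y) = δ_x{}^y (it exists since g is nondegenerate). Then Σ_{x,y,z∈X} tr(L_{e_x} ∘ L_{e_y} ∘ L_{e_z}) · tr(L_{b^z} ∘ L_{b^y} ∘ L_{b^x}) = dim_ℂ A. (In components this is the relation C_{z₁z₂z₃} C_{u₃u₂u₁} g^{z₁u₁} g^{z₂u₂} g^{z₃u₃} = |X|.) -/

import Mathlib

open TensorProduct Coalgebra

/-- The linear functional `a ↦ tr(L_a)` (trace of left multiplication by `a`). -/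
noncomputable def traceLmul (A : Type*) [Ring A] [Algebra ℂ A] : A →ₗ[ℂ] ℂ :=
  (LinearMap.trace ℂ A) ∘ₗ (LinearMap.mul ℂ A)

/-- The metric of a Hopf algebra: the bilinear form `g(a,b) = tr(L_{ab})`. -/
noncomputable def hopfMetric (A : Type*) [Ring A] [Algebra ℂ A] :
    A →ₗ[ℂ] A →ₗ[ℂ] ℂ :=
  (LinearMap.mul ℂ A).compr₂ (traceLmul A)

lemma hopfMetric_eq_trace (A : Type*) [Ring A] [Algebra ℂ A] (a c : A) :
    hopfMetric A a c = LinearMap.trace ℂ A (LinearMap.mulLeft ℂ (a * c)) := by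
  have : LinearMap.mul ℂ A (a * c) = LinearMap.mulLeft ℂ (a * c) := by
    ext x; rfl
  simp [hopfMetric, traceLmul, LinearMap.compr₂_apply, this]

lemma hopfMetric_assoc (A : Type*) [Ring A] [Algebra ℂ A] (a c d : A) :
    hopfMetric A (a * c) d = hopfMetric A a (c * d) := by
  rw [hopfMetric_eq_trace, hopfMetric_eq_trace, mul_assoc]

lemma hopfMetric_symm (A : Type*) [Ring A] [Algebra ℂ A] [Module.Finite ℂ A] (a c : A) :
    hopfMetric A a c = hopfMetric A c a := by
  rw [hopfMetric_eq_trace, hopfMetric_eq_trace, LinearMap.mulLeft_mul, LinearMap.mulLeft_mul,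
    ← Module.End.mul_eq_comp, ← Module.End.mul_eq_comp, LinearMap.trace_mul_comm]

/-- If `{b^x}` is the basis dual to a basis `{e_x}` with respect to the metric `g`,
then `Σ_{x,y,z} tr(L_{e_x} ∘ L_{e_y} ∘ L_{e_z}) · tr(L_{b^z} ∘ L_{b^y} ∘ L_{b^x}) = dim A`.
(In components: `C_{z₁z₂z₃} C_{u₃u₂u₁} g^{z₁u₁} g^{z₂u₂} g^{z₃u₃} = |X|`.) -/
theorem sum_CCC_dual_basis
    (A : Type*) [Ring A] [HopfAlgebra ℂ A] [Module.Finite ℂ A]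
    (hinv : ∀ a : A, HopfAlgebra.antipode (R := ℂ) (HopfAlgebra.antipode (R := ℂ) a) = a)
    (X : Type*) [Fintype X] [DecidableEq X] (e : Module.Basis X ℂ A) (b : X → A)
    (hb : ∀ x y : X, hopfMetric A (e x) (b y) = if x = y then 1 else 0) :
    ∑ x : X, ∑ y : X, ∑ z : X,
        LinearMap.trace ℂ A
            ((LinearMap.mulLeft ℂ (e x) : Module.End ℂ A) *
              LinearMap.mulLeft ℂ (e y) * LinearMap.mulLeft ℂ (e z)) *
          LinearMap.trace ℂ A
            ((LinearMap.mulLeft ℂ (b z) : Module.End ℂ A) *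
              LinearMap.mulLeft ℂ (b y) * LinearMap.mulLeft ℂ (b x))
      = (Module.finrank ℂ A : ℂ) := by
  classical
  have hcard : Fintype.card X = Module.finrank ℂ A :=
    (Module.finrank_eq_card_basis e).symm
  cases isEmpty_or_nonempty X with
  | inl h =>
      simp [← hcard]
  | inr h =>
      -- b is linearly independent
      have htr : ∀ a c : A,
          LinearMap.trace ℂ A
            ((LinearMap.mulLeft ℂ a : Module.End ℂ A) * LinearMap.mulLeft ℂ c) = hopfMetric A a c := by
        intro a c
        rw [hopfMetric_eq_trace, LinearMap.mulLeft_mul, ← Module.End.mul_eq_comp]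
      have hmul3 : ∀ a c d : A,
          (LinearMap.mulLeft ℂ a : Module.End ℂ A) * LinearMap.mulLeft ℂ c *
            LinearMap.mulLeft ℂ d
            = (LinearMap.mulLeft ℂ (a * c) : Module.End ℂ A) * LinearMap.mulLeft ℂ d := by
        intro a c d
        rw [LinearMap.mulLeft_mul, ← Module.End.mul_eq_comp]
      -- the linear map pairing with e
      let G : A →ₗ[ℂ] (X → ℂ) := LinearMap.pi fun x => hopfMetric A (e x)
      have hGb : ∀ y, G (b y) = Pi.single y 1 := by
        intro y
        ext x
        simp [G, hb x y, Pi.single_apply]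
      have hli : LinearIndependent ℂ b := by
        have h1 : LinearIndependent ℂ (G ∘ b) := by
          have : G ∘ b = ⇑(Pi.basisFun ℂ X) := by
            ext y x
            rw [Function.comp_apply, hGb, Pi.basisFun_apply]
          rw [this]
          exact (Pi.basisFun ℂ X).linearIndependent
        exact LinearIndependent.of_comp G h1
      let B : Module.Basis X ℂ A := basisOfLinearIndependentOfCardEqFinrank hli hcard
      have hB : ⇑B = b := coe_basisOfLinearIndependentOfCardEqFinrank hli hcard
      -- expansion coefficients
      have hrepr : ∀ (a : A) (z : X), B.repr a z = hopfMetric A (e z) a := by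
        intro a z
        conv_rhs => rw [← B.sum_repr a]
        rw [map_sum]
        simp only [map_smul, hB, hb, smul_eq_mul, mul_ite, mul_one, mul_zero]
        simp
      have hexp : ∀ a : A, ∑ z : X, hopfMetric A (e z) a • b z = a := by
        intro a
        conv_rhs => rw [← B.sum_repr a]
        refine Finset.sum_congr rfl fun z _ => ?_
        rw [hrepr, hB]
      -- rewrite traces as g
      have step1 : ∀ x y : X,
          ∑ z : X,
            LinearMap.trace ℂ A
              ((LinearMap.mulLeft ℂ (e x) : Module.End ℂ A) *
                LinearMap.mulLeft ℂ (e y) * LinearMap.mulLeft ℂ (e z)) *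
            LinearMap.trace ℂ A
              ((LinearMap.mulLeft ℂ (b z) : Module.End ℂ A) *
                LinearMap.mulLeft ℂ (b y) * LinearMap.mulLeft ℂ (b x))
            = hopfMetric A (e x * e y) (b y * b x) := by
        intro x y
        have : ∀ z : X,
            LinearMap.trace ℂ A
              ((LinearMap.mulLeft ℂ (e x) : Module.End ℂ A) *
                LinearMap.mulLeft ℂ (e y) * LinearMap.mulLeft ℂ (e z)) *
            LinearMap.trace ℂ A
              ((LinearMap.mulLeft ℂ (b z) : Module.End ℂ A) *
                LinearMap.mulLeft ℂ (b y) * LinearMap.mulLeft ℂ (b x))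
              = hopfMetric A (b y * b x) (hopfMetric A (e z) (e x * e y) • b z) := by
          intro z
          rw [hmul3, htr, hmul3, htr, map_smul, smul_eq_mul,
            hopfMetric_symm A (e x * e y) (e z), hopfMetric_assoc A (b z) (b y) (b x),
            hopfMetric_symm A (b z) (b y * b x)]
        rw [Finset.sum_congr rfl fun z _ => this z, ← map_sum, hexp (e x * e y),
          hopfMetric_symm]
      -- sum over y, x
      have step2 :
          ∑ x : X, ∑ y : X, hopfMetric A (e x * e y) (b y * b x)
            = ∑ x : X, hopfMetric A (e x) ((∑ y : X, e y * b y) * b x) := by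
        refine Finset.sum_congr rfl fun x _ => ?_
        rw [Finset.sum_mul, map_sum]
        refine Finset.sum_congr rfl fun y _ => ?_
        rw [hopfMetric_assoc, mul_assoc]
      set u : A := ∑ y : X, e y * b y with hu
      -- trace of L_u via basis B
      have htrace_u : LinearMap.trace ℂ A (LinearMap.mulLeft ℂ u)
          = ∑ x : X, hopfMetric A (e x) (u * b x) := by
        rw [LinearMap.trace_eq_matrix_trace ℂ B, Matrix.trace]
        refine Finset.sum_congr rfl fun x _ => ?_
        rw [Matrix.diag_apply, LinearMap.toMatrix_apply, hrepr, hB, LinearMap.mulLeft_apply]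
      -- trace of L_u equals card X
      have htrace_u' : LinearMap.trace ℂ A (LinearMap.mulLeft ℂ u)
          = (Fintype.card X : ℂ) := by
        have h1 : LinearMap.trace ℂ A (LinearMap.mulLeft ℂ u) = hopfMetric A u 1 := by
          rw [hopfMetric_eq_trace, mul_one]
        rw [h1, hu, map_sum]
        have : ∀ y : X, hopfMetric A (e y * b y) 1 = 1 := by
          intro y
          rw [hopfMetric_assoc, mul_one, hb]
          simp
        simp only [LinearMap.sum_apply]
        rw [Finset.sum_congr rfl fun y _ => this y]
        simp
      calc
        _ = ∑ x : X, ∑ y : X, hopfMetric A (e x * e y) (b y * b x) := by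
              refine Finset.sum_congr rfl fun x _ => Finset.sum_congr rfl fun y _ => step1 x y
        _ = ∑ x : X, hopfMetric A (e x) (u * b x) := step2
        _ = (Fintype.card X : ℂ) := by rw [← htrace_u, htrace_u']
        _ = (Module.finrank ℂ A : ℂ) := by rw [hcard]
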